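/- arXiv:2202.09329 — 4 statements merged into one kernel-verified Lean document; each statement's English description precedes it below -/
import Mathlib

section
/- Let K be a field and let P ∈ K[x]^{m×n} have no zero row, let s ∈ ℤ^n, and let t = rdeg_s(P). Then P is s-reduced if and only if for every k ≥ 1 and every matrix Q ∈ K[x]^{k×m} one has rdeg_s(Q·P) = rdeg_t(Q). -/
open Polynomial Matrix

noncomputable section

variable {K : Type*} [Field K]

/-- Degree of a univariate polynomial, viewed in `ℤ ∪ {⊥}`. -/
def pdegZ (p : K[X]) : WithBot ℤ := p.degree.map (Nat.cast : ℕ → ℤ)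

/-- Shifted degree (`s`-degree) of a row vector. -/
def sdeg {n : ℕ} (s : Fin n → ℤ) (p : Fin n → K[X]) : WithBot ℤ :=
  Finset.univ.sup fun j => pdegZ (p j) + (s j : WithBot ℤ)

/-- `s`-leading matrix of `P`. -/
def leadMat {m n : ℕ} (s : Fin n → ℤ) (P : Matrix (Fin m) (Fin n) K[X]) :
    Matrix (Fin m) (Fin n) K :=
  Matrix.of fun i j =>
    if pdegZ (P i j) + (s j : WithBot ℤ) = sdeg s (P i) then (P i j).leadingCoeff else 0

/-- `P` is `s`-reduced: its `s`-leading matrix has full row rank. -/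
def IsShiftReduced {m n : ℕ} (s : Fin n → ℤ) (P : Matrix (Fin m) (Fin n) K[X]) : Prop :=
  (leadMat s P).rank = m

/-- `j` is the `s`-pivot index of the row `p`: the largest index where the `s`-degree is attained. -/
def IsPivotIndex {n : ℕ} (s : Fin n → ℤ) (p : Fin n → K[X]) (j : Fin n) : Prop :=
  pdegZ (p j) + (s j : WithBot ℤ) = sdeg s p ∧
  ∀ j', j < j' → pdegZ (p j') + (s j' : WithBot ℤ) ≠ sdeg s p

/-- `P` is in `s`-weak Popov form: no zero row and strictly increasing `s`-pivot indices. -/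
def IsWeakPopov {m n : ℕ} (s : Fin n → ℤ) (P : Matrix (Fin m) (Fin n) K[X]) : Prop :=
  (∀ i, P i ≠ 0) ∧ ∃ piv : Fin m → Fin n, StrictMono piv ∧ ∀ i, IsPivotIndex s (P i) (piv i)

/-- The rows of `Kb` form a basis of the left kernel of `F`. -/
def IsKernelBasis {ℓ m : ℕ} {β : Type*} [Fintype β]
    (Kb : Matrix (Fin ℓ) (Fin m) K[X]) (F : Matrix (Fin m) β K[X]) : Prop :=
  (∀ i, Kb i ᵥ* F = 0) ∧
  LinearIndependent K[X] (fun i : Fin ℓ => Kb i) ∧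
  ∀ p : Fin m → K[X], p ᵥ* F = 0 → ∃ u : Fin ℓ → K[X], p = u ᵥ* Kb

/-- Membership in the relation module `Rel_M(F)`. -/
def InRelModule {m n : ℕ} (M : Matrix (Fin n) (Fin n) K[X])
    (F : Matrix (Fin m) (Fin n) K[X]) (p : Fin m → K[X]) : Prop :=
  ∃ q : Fin n → K[X], p ᵥ* F = q ᵥ* M

/-- The rows of `A` form a basis of the relation module `Rel_M(F)`. -/
def IsRelationBasis {ℓ m n : ℕ} (M : Matrix (Fin n) (Fin n) K[X])
    (A : Matrix (Fin ℓ) (Fin m) K[X]) (F : Matrix (Fin m) (Fin n) K[X]) : Prop :=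
  (∀ i, InRelModule M F (A i)) ∧
  LinearIndependent K[X] (fun i : Fin ℓ => A i) ∧
  ∀ p : Fin m → K[X], InRelModule M F p → ∃ u : Fin ℓ → K[X], p = u ᵥ* A

/-- Rank of a polynomial matrix: its rank over the fraction field `K(x)`. -/
def polyRank {α β : Type*} [Fintype β] (F : Matrix α β K[X]) : ℕ :=
  (F.map (algebraMap K[X] (RatFunc K))).rank

/-- Lexicographic comparison of tuples. -/
def lexLE {r n : ℕ} (a b : Fin r → Fin n) : Prop :=
  ∀ i, (∀ k, k < i → a k = b k) → a i ≤ b i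

/-- `j` lists the column rank profile of `F`: the lexicographically smallest strictly
increasing tuple of `rank F` column indices selecting columns of full rank. -/
def IsColRankProfile {α : Type*} {n r : ℕ} (F : Matrix α (Fin n) K[X])
    (j : Fin r → Fin n) : Prop :=
  StrictMono j ∧ polyRank F = r ∧ polyRank (F.submatrix id j) = r ∧
  ∀ j' : Fin r → Fin n, StrictMono j' → polyRank (F.submatrix id j') = r → lexLE j j'

/-! If `rdeg_t q ≤ d`, then `rdeg_s (q P) ≤ d` and the coefficient of degree `d - s j` of
`(q P) j` is the `j`-th entry of `c · lm_s(P)`, where `c i` is the coefficient of degree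
`d - t i` of `q i`; moreover `rdeg_t q = d` exactly when `c ≠ 0`. Hence the degree of `q P`
drops below `rdeg_t q` exactly when `c` is a nonzero vector of the left kernel of `lm_s(P)`,
and every vector `c` arises in this way, from the row `q i = c i x ^ (d - t i)`. -/

theorem withBot_add_coe_le_coe_iff {x : WithBot ℤ} {a b : ℤ} :
    x + (a : WithBot ℤ) ≤ b ↔ x ≤ ((b - a : ℤ) : WithBot ℤ) := by
  cases x <;> simp [← WithBot.coe_add]; omega

theorem withBot_coe_le_add_coe_iff {x : WithBot ℤ} {a b : ℤ} :
    (b : WithBot ℤ) ≤ x + (a : WithBot ℤ) ↔ ((b - a : ℤ) : WithBot ℤ) ≤ x := by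
  cases x <;> simp [← WithBot.coe_add]

theorem withBot_add_coe_lt_coe_iff {x : WithBot ℤ} {a b : ℤ} :
    x + (a : WithBot ℤ) < b ↔ x < ((b - a : ℤ) : WithBot ℤ) := by
  cases x <;> simp [← WithBot.coe_add]; omega

theorem withBot_add_coe_eq_coe_iff {x : WithBot ℤ} {a b : ℤ} :
    x + (a : WithBot ℤ) = b ↔ x = ((b - a : ℤ) : WithBot ℤ) := by
  cases x <;> simp [← WithBot.coe_add]; omega

@[simp]
theorem pdegZ_zero : pdegZ (0 : K[X]) = ⊥ := by simp [pdegZ]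

theorem pdegZ_eq_natDegree {q : K[X]} (hq : q ≠ 0) : pdegZ q = (q.natDegree : ℤ) := by
  rw [pdegZ, degree_eq_natDegree hq]
  rfl

theorem pdegZ_mul (q r : K[X]) : pdegZ (q * r) = pdegZ q + pdegZ r := by
  simp only [pdegZ, degree_mul]
  exact WithBot.map_add (Nat.castAddMonoidHom ℤ) _ _

theorem pdegZ_le_pdegZ_of_degree_le {q r : K[X]} (h : q.degree ≤ r.degree) :
    pdegZ q ≤ pdegZ r :=
  WithBot.map_le_iff _ Nat.cast_le |>.mpr h

theorem pdegZ_sum_le {ι : Type*} {S : Finset ι} {f : ι → K[X]} {D : WithBot ℤ}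
    (h : ∀ i ∈ S, pdegZ (f i) ≤ D) : pdegZ (∑ i ∈ S, f i) ≤ D := by
  refine Finset.sum_induction f (fun q => pdegZ q ≤ D) (fun q r hq hr => ?_) (by simp) h
  rcases le_max_iff.mp (degree_add_le q r) with h | h
  exacts [(pdegZ_le_pdegZ_of_degree_le h).trans hq, (pdegZ_le_pdegZ_of_degree_le h).trans hr]

def coeffZ (q : K[X]) (e : ℤ) : K := if 0 ≤ e then q.coeff e.toNat else 0

theorem le_pdegZ_of_coeffZ_ne_zero {q : K[X]} {e : ℤ} (h : coeffZ q e ≠ 0) :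
    (e : WithBot ℤ) ≤ pdegZ q := by
  unfold coeffZ at h
  split_ifs at h with he
  · have hq : q ≠ 0 := by rintro rfl; simp at h
    rw [pdegZ_eq_natDegree hq, WithBot.coe_le_coe]
    have := le_natDegree_of_ne_zero h
    omega
  · exact absurd rfl h

theorem coeffZ_eq_zero_of_pdegZ_lt {q : K[X]} {e : ℤ} (h : pdegZ q < e) : coeffZ q e = 0 := by
  by_contra hc
  exact (le_pdegZ_of_coeffZ_ne_zero hc).not_gt h

theorem coeffZ_of_pdegZ_eq {q : K[X]} {e : ℤ} (h : pdegZ q = e) :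
    coeffZ q e = q.leadingCoeff := by
  have hq : q ≠ 0 := by rintro rfl; simp at h
  rw [pdegZ_eq_natDegree hq, WithBot.coe_inj] at h
  subst h
  simp [coeffZ]

theorem coeffZ_mul_of_pdegZ_le {q r : K[X]} {a b : ℤ} (hq : pdegZ q ≤ a) (hr : pdegZ r ≤ b) :
    coeffZ (q * r) (a + b) = coeffZ q a * coeffZ r b := by
  rcases eq_or_ne q 0 with rfl | hq0
  · simp [coeffZ]
  rcases eq_or_ne r 0 with rfl | hr0
  · simp [coeffZ]
  rw [pdegZ_eq_natDegree hq0, WithBot.coe_le_coe] at hq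
  rw [pdegZ_eq_natDegree hr0, WithBot.coe_le_coe] at hr
  have hab : (a + b).toNat = a.toNat + b.toNat := by omega
  rw [coeffZ, coeffZ, coeffZ, if_pos (by omega), if_pos (by omega), if_pos (by omega), hab,
    coeff_mul_add_eq_of_natDegree_le (by omega) (by omega)]

theorem coeffZ_sum {ι : Type*} (S : Finset ι) (f : ι → K[X]) (e : ℤ) :
    coeffZ (∑ i ∈ S, f i) e = ∑ i ∈ S, coeffZ (f i) e := by
  unfold coeffZ
  split_ifs
  · exact finsetSum_coeff S f e.toNat
  · simp

theorem coeffZ_C_mul_X_pow (a : K) (k : ℕ) : coeffZ (C a * X ^ k) k = a := by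
  simp [coeffZ]

theorem pdegZ_C_mul_X_pow_le (a : K) (k : ℕ) : pdegZ (C a * X ^ k) ≤ (k : ℤ) :=
  (WithBot.map_le_iff _ Nat.cast_le (y := (k : WithBot ℕ))).mpr (degree_C_mul_X_pow_le k a)

section ShiftedDegree

variable {n : ℕ}

theorem sdeg_le_iff {s : Fin n → ℤ} {p : Fin n → K[X]} {D : WithBot ℤ} :
    sdeg s p ≤ D ↔ ∀ j, pdegZ (p j) + (s j : WithBot ℤ) ≤ D := by
  simp [sdeg]

theorem le_sdeg (s : Fin n → ℤ) (p : Fin n → K[X]) (j : Fin n) :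
    pdegZ (p j) + (s j : WithBot ℤ) ≤ sdeg s p :=
  sdeg_le_iff.mp le_rfl j

theorem exists_add_eq_sdeg {s : Fin n → ℤ} {p : Fin n → K[X]} (hp : sdeg s p ≠ ⊥) :
    ∃ j, pdegZ (p j) + (s j : WithBot ℤ) = sdeg s p := by
  rcases (Finset.univ : Finset (Fin n)).eq_empty_or_nonempty with h | h
  · simp [sdeg, h] at hp
  obtain ⟨j, -, hj⟩ := Finset.exists_mem_eq_sup _ h fun j => pdegZ (p j) + (s j : WithBot ℤ)
  exact ⟨j, hj.symm⟩

-- the coefficient of `x ^ d` in the shifted row `p * diag(x ^ s)`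
def coeffRow (s : Fin n → ℤ) (p : Fin n → K[X]) (d : ℤ) : Fin n → K :=
  fun j => coeffZ (p j) (d - s j)

theorem sdeg_eq_iff_coeffRow_ne_zero {s : Fin n → ℤ} {p : Fin n → K[X]} {d : ℤ}
    (hp : sdeg s p ≤ d) : sdeg s p = d ↔ coeffRow s p d ≠ 0 := by
  constructor
  · intro hd h0
    obtain ⟨j, hj⟩ := exists_add_eq_sdeg (hd ▸ WithBot.coe_ne_bot)
    have hj' : pdegZ (p j) = ((d - s j : ℤ) : WithBot ℤ) :=
      withBot_add_coe_eq_coe_iff.mp (hj.trans hd)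
    have hpj : p j ≠ 0 := by rintro h; simp [h] at hj'
    have := congrFun h0 j
    simp only [coeffRow, coeffZ_of_pdegZ_eq hj', Pi.zero_apply] at this
    exact hpj (leadingCoeff_eq_zero.mp this)
  · intro h0
    obtain ⟨j, hj⟩ := Function.ne_iff.mp h0
    refine le_antisymm hp ((withBot_coe_le_add_coe_iff.mpr ?_).trans (le_sdeg s p j))
    exact le_pdegZ_of_coeffZ_ne_zero hj

theorem pdegZ_le_of_sdeg_le {s : Fin n → ℤ} {p : Fin n → K[X]} {d : ℤ} (hp : sdeg s p ≤ d)
    (j : Fin n) : pdegZ (p j) ≤ ((d - s j : ℤ) : WithBot ℤ) :=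
  withBot_add_coe_le_coe_iff.mp ((le_sdeg s p j).trans hp)

theorem exists_coeffRow_eq (s : Fin n → ℤ) (g : Fin n → K) :
    ∃ (q : Fin n → K[X]) (d : ℤ), sdeg s q ≤ d ∧ coeffRow s q d = g := by
  obtain ⟨d, hd⟩ := (Set.finite_range s).bddAbove
  have hdt (i : Fin n) : ((d - s i).toNat : ℤ) = d - s i := by
    have := hd ⟨i, rfl⟩; omega
  refine ⟨fun i => C (g i) * X ^ (d - s i).toNat, d, sdeg_le_iff.mpr fun i => ?_, ?_⟩
  · rw [withBot_add_coe_le_coe_iff, ← hdt]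
    exact pdegZ_C_mul_X_pow_le _ _
  · funext i
    simpa [coeffRow, hdt] using coeffZ_C_mul_X_pow (g i) (d - s i).toNat

end ShiftedDegree

section PredictableDegree

variable {m n : ℕ} {P : Matrix (Fin m) (Fin n) K[X]} {s : Fin n → ℤ} {t : Fin m → ℤ}

theorem leadMat_eq_coeffRow (ht : ∀ i, (t i : WithBot ℤ) = sdeg s (P i)) (i : Fin m) :
    leadMat s P i = coeffRow s (P i) (t i) := by
  funext j
  rw [leadMat, of_apply, coeffRow, ← ht i]
  split_ifs with h
  · exact (coeffZ_of_pdegZ_eq (withBot_add_coe_eq_coe_iff.mp h)).symm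
  · refine (coeffZ_eq_zero_of_pdegZ_lt (withBot_add_coe_lt_coe_iff.mp ?_)).symm
    exact lt_of_le_of_ne ((ht i).symm ▸ le_sdeg s (P i) j) h

theorem sdeg_vecMul_le_of_le (ht : ∀ i, (t i : WithBot ℤ) = sdeg s (P i)) {q : Fin m → K[X]}
    {d : ℤ} (hq : sdeg t q ≤ d) : sdeg s (q ᵥ* P) ≤ d := by
  refine sdeg_le_iff.mpr fun j => withBot_add_coe_le_coe_iff.mpr ?_
  rw [vecMul, dotProduct]
  refine pdegZ_sum_le fun i _ => ?_
  rw [pdegZ_mul, show d - s j = (d - t i) + (t i - s j) by ring, WithBot.coe_add]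
  exact add_le_add (pdegZ_le_of_sdeg_le hq i) (pdegZ_le_of_sdeg_le (ht i).symm.le j)

theorem coeffRow_vecMul (ht : ∀ i, (t i : WithBot ℤ) = sdeg s (P i)) {q : Fin m → K[X]}
    {d : ℤ} (hq : sdeg t q ≤ d) :
    coeffRow s (q ᵥ* P) d = coeffRow t q d ᵥ* leadMat s P := by
  funext j
  simp only [coeffRow, vecMul, dotProduct, coeffZ_sum, leadMat_eq_coeffRow ht]
  refine Finset.sum_congr rfl fun i _ => ?_
  rw [show d - s j = (d - t i) + (t i - s j) by ring,
    coeffZ_mul_of_pdegZ_le (pdegZ_le_of_sdeg_le hq i) (pdegZ_le_of_sdeg_le (ht i).symm.le j)]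

theorem sdeg_vecMul_le (ht : ∀ i, (t i : WithBot ℤ) = sdeg s (P i)) (q : Fin m → K[X]) :
    sdeg s (q ᵥ* P) ≤ sdeg t q :=
  WithBot.forall_le_coe_iff_le.mp fun _ hd => sdeg_vecMul_le_of_le ht hd

theorem isShiftReduced_iff_vecMul_eq_zero :
    IsShiftReduced s P ↔ ∀ g : Fin m → K, g ᵥ* leadMat s P = 0 → g = 0 := by
  have hrows := linearIndependent_iff_card_eq_finrank_span (R := K) (b := (leadMat s P).row)
  rw [Fintype.card_fin] at hrows
  rw [IsShiftReduced, rank_eq_finrank_span_row, ← Set.finrank, eq_comm, ← hrows,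
    ← vecMul_injective_iff, ← coe_vecMulLinear, injective_iff_map_eq_zero]
  rfl

theorem sdeg_vecMul_of_isShiftReduced (ht : ∀ i, (t i : WithBot ℤ) = sdeg s (P i))
    (hP : IsShiftReduced s P) (q : Fin m → K[X]) : sdeg s (q ᵥ* P) = sdeg t q := by
  refine le_antisymm (sdeg_vecMul_le ht q) ?_
  cases hq : sdeg t q with
  | bot => exact bot_le
  | coe d =>
    have hne : coeffRow t q d ≠ 0 := (sdeg_eq_iff_coeffRow_ne_zero hq.le).mp hq
    refine ((sdeg_eq_iff_coeffRow_ne_zero (sdeg_vecMul_le_of_le ht hq.le)).mpr ?_).ge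
    rw [coeffRow_vecMul ht hq.le]
    exact fun h0 => hne (isShiftReduced_iff_vecMul_eq_zero.mp hP _ h0)

theorem isShiftReduced_of_sdeg_vecMul (ht : ∀ i, (t i : WithBot ℤ) = sdeg s (P i))
    (h : ∀ q : Fin m → K[X], sdeg s (q ᵥ* P) = sdeg t q) : IsShiftReduced s P := by
  refine isShiftReduced_iff_vecMul_eq_zero.mpr fun g hg => ?_
  obtain ⟨q, d, hq, rfl⟩ := exists_coeffRow_eq t g
  by_contra hne
  have hqd : sdeg t q = d := (sdeg_eq_iff_coeffRow_ne_zero hq).mpr hne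
  refine (sdeg_eq_iff_coeffRow_ne_zero (sdeg_vecMul_le_of_le ht hq)).mp ((h q).trans hqd) ?_
  rw [coeffRow_vecMul ht hq, hg]

end PredictableDegree

theorem stmt0_general {K : Type*} [Field K] {m n : ℕ}
    (P : Matrix (Fin m) (Fin n) K[X])
    (s : Fin n → ℤ) (t : Fin m → ℤ) (ht : ∀ i, (t i : WithBot ℤ) = sdeg s (P i)) :
    IsShiftReduced s P ↔
      ∀ k : ℕ, 1 ≤ k → ∀ Q : Matrix (Fin k) (Fin m) K[X],
        ∀ i, sdeg s ((Q * P) i) = sdeg t (Q i) := by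
  refine ⟨fun hP k _ Q i => sdeg_vecMul_of_isShiftReduced ht hP (Q i), fun h => ?_⟩
  exact isShiftReduced_of_sdeg_vecMul ht fun q => h 1 le_rfl (of fun _ => q) 0

/-- Predictable degree property. -/
theorem stmt0 {K : Type*} [Field K] {m n : ℕ}
    (P : Matrix (Fin m) (Fin n) K[X]) (hP : ∀ i, P i ≠ 0)
    (s : Fin n → ℤ) (t : Fin m → ℤ) (ht : ∀ i, (t i : WithBot ℤ) = sdeg s (P i)) :
    IsShiftReduced s P ↔
      ∀ k : ℕ, 1 ≤ k → ∀ Q : Matrix (Fin k) (Fin m) K[X],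
        ∀ i, sdeg s ((Q * P) i) = sdeg t (Q i) :=
  stmt0_general P s t ht

end
end

section
/- Let K be a field and let F ∈ K[x]^{m×n} be partitioned columnwise as F = [F₁ | F₂] with F₁ ∈ K[x]^{m×n₁} and F₂ ∈ K[x]^{m×n₂}. Let K₁ ∈ K[x]^{ℓ₁×m} be a basis of Ker(F₁) and let K₂ ∈ K[x]^{ℓ₂×ℓ₁} be a basis of Ker(K₁·F₂). Then the product K₂·K₁ is a basis of Ker(F). -/
open Polynomial Matrix

noncomputable section

variable {K : Type*} [Field K]

/-! The kernel of `[F₁ | F₂]` is `Ker F₁ ∩ Ker F₂`. A vector of `Ker F₁` is `u ᵥ* K₁`, and it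
also kills `F₂` exactly when `u ∈ Ker (K₁ * F₂)`, i.e. `u = v ᵥ* K₂`. Independence holds because
`v ↦ v ᵥ* (K₂ * K₁)` is the composite of the injective maps `ᵥ* K₂` and `ᵥ* K₁`. -/

namespace Matrix

theorem vecMul_fromCols_eq_zero_iff {R m n₁ n₂ : Type*} [Semiring R] [Fintype m] (v : m → R)
    (B₁ : Matrix m n₁ R) (B₂ : Matrix m n₂ R) :
    v ᵥ* fromCols B₁ B₂ = 0 ↔ v ᵥ* B₁ = 0 ∧ v ᵥ* B₂ = 0 := by
  rw [vecMul_fromCols, ← Sum.elim_zero_zero, Sum.elim_eq_iff]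

theorem linearIndependent_rows_mul {R l m n : Type*} [CommRing R] [Fintype l] [Fintype m]
    {A : Matrix l m R} {B : Matrix m n R} (hA : LinearIndependent R A.row)
    (hB : LinearIndependent R B.row) : LinearIndependent R (A * B).row := by
  rw [← vecMul_injective_iff] at hA hB ⊢
  have hcomp : (A * B).vecMul = B.vecMul ∘ A.vecMul := funext fun v => (vecMul_vecMul v A B).symm
  exact hcomp ▸ hB.comp hA

end Matrix

theorem isKernelBasis_iff {ℓ m : ℕ} {β : Type*} [Fintype β]
    (Kb : Matrix (Fin ℓ) (Fin m) K[X]) (F : Matrix (Fin m) β K[X]) :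
    IsKernelBasis Kb F ↔
      LinearIndependent K[X] Kb.row ∧ ∀ p, p ᵥ* F = 0 ↔ ∃ u, u ᵥ* Kb = p := by
  constructor
  · rintro ⟨hrows, hli, hspan⟩
    have hKbF : Kb * F = 0 := funext fun i => (mul_apply_eq_vecMul Kb F i).trans (hrows i)
    refine ⟨hli, fun p => ⟨fun hp => (hspan p hp).imp fun _ hu => hu.symm, ?_⟩⟩
    rintro ⟨u, rfl⟩
    rw [vecMul_vecMul, hKbF, vecMul_zero]
  · rintro ⟨hli, hker⟩
    refine ⟨fun i => (hker _).2 ⟨Pi.single i 1, single_one_vecMul i Kb⟩, hli, fun p hp => ?_⟩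
    exact ((hker p).1 hp).imp fun _ hu => hu.symm

/-- Composition of kernel bases along a column partition. -/
theorem stmt14 {K : Type*} [Field K] {m n₁ n₂ ℓ₁ ℓ₂ : ℕ}
    (F₁ : Matrix (Fin m) (Fin n₁) K[X]) (F₂ : Matrix (Fin m) (Fin n₂) K[X])
    (K₁ : Matrix (Fin ℓ₁) (Fin m) K[X]) (hK₁ : IsKernelBasis K₁ F₁)
    (K₂ : Matrix (Fin ℓ₂) (Fin ℓ₁) K[X]) (hK₂ : IsKernelBasis K₂ (K₁ * F₂)) :
    IsKernelBasis (K₂ * K₁) (Matrix.fromCols F₁ F₂) := by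
  rw [isKernelBasis_iff] at hK₁ hK₂ ⊢
  refine ⟨linearIndependent_rows_mul hK₂.1 hK₁.1, fun p => ?_⟩
  rw [vecMul_fromCols_eq_zero_iff, hK₁.2]
  constructor
  · rintro ⟨⟨u, rfl⟩, hu⟩
    obtain ⟨v, rfl⟩ := (hK₂.2 u).1 (by rwa [vecMul_vecMul] at hu)
    exact ⟨v, (vecMul_vecMul v K₂ K₁).symm⟩
  · rintro ⟨v, rfl⟩
    refine ⟨⟨v ᵥ* K₂, vecMul_vecMul v K₂ K₁⟩, ?_⟩
    rw [← vecMul_vecMul, vecMul_vecMul _ K₁, (hK₂.2 _).2 ⟨v, rfl⟩]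

end
end

section
/- Let K be a field and let F ∈ K[x]^{m×n} be partitioned columnwise as F = [F₁ | F₂] with F₁ ∈ K[x]^{m×n₁}. Let K₁ ∈ K[x]^{ℓ₁×m} be a basis of Ker(F₁) and let F' = K₁·F₂. Then the column rank profile of F is the concatenation of the column rank profile (j₁,…,j_{r₁}) of F₁ with the tuple (n₁ + j'₁, …, n₁ + j'_{r₂}), where (j'₁,…,j'_{r₂}) is the column rank profile of F'. -/
open Polynomial Matrix

noncomputable section

variable {K : Type*} [Field K]

/-!
Over the fraction field `K(x)`, the rows of the kernel basis `K₁` span the left kernel of `F₁`,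
so the kernel of `v ↦ K₁ v` is exactly the column space of `F₁`. Hence for every set `S` of
columns of `F₂`, `rank [F₁ | F₂|_S] = rank F₁ + rank (K₁ F₂)|_S`.

A strictly increasing choice `j` of `rank A` independent columns of `A` is lexicographically
least iff, for every `c`, the first `c` columns of `A` have rank at most `#{k | j k ≤ c}`.
Applying the rank identity to the prefixes of `F` turns the prefix bounds for `F₁` and `K₁ F₂`
into those for `F`.
-/

open Module Submodule Set

section ColumnSpans

variable {L : Type*} [Field L] {α β ι : Type*}

theorem Matrix.rank_submatrix_id_eq_finrank_image {κ : Type*} [Fintype κ]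
    (A : Matrix α ι L) (f : κ → ι) :
    (A.submatrix id f).rank = (A.col '' range f).finrank L := by
  rw [Matrix.rank_eq_finrank_span_cols, ← Set.range_comp]
  rfl

theorem Matrix.rank_eq_finrank_image_univ [Fintype ι] (A : Matrix α ι L) :
    A.rank = (A.col '' univ).finrank L := by
  rw [Matrix.rank_eq_finrank_span_cols, Set.image_univ]
  rfl

theorem Matrix.rank_add_finrank_ker_mulVecLin [Fintype ι] (A : Matrix α ι L) :
    A.rank + finrank L (LinearMap.ker A.mulVecLin) = Fintype.card ι := by
  rw [Matrix.rank, LinearMap.finrank_range_add_finrank_ker, Module.finrank_fintype_fun_eq_card]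

theorem Matrix.col_mul [Fintype α] (C : Matrix β α L) (A : Matrix α ι L) (j : ι) :
    (C * A).col j = C *ᵥ A.col j := by
  ext i
  simp [Matrix.mul_apply, Matrix.mulVec, dotProduct]

theorem LinearMap.finrank_eq_finrank_ker_add_finrank_map {V W : Type*} [AddCommGroup V]
    [Module L V] [AddCommGroup W] [Module L W] [FiniteDimensional L V]
    (f : V →ₗ[L] W) {U : Submodule L V} (h : LinearMap.ker f ≤ U) :
    finrank L U = finrank L (LinearMap.ker f) + finrank L (U.map f) := by
  have := LinearMap.finrank_range_add_finrank_ker (f.domRestrict U)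
  rw [LinearMap.range_domRestrict, LinearMap.ker_domRestrict,
    (Submodule.comapSubtypeEquivOfLe h).finrank_eq] at this
  omega

theorem Matrix.ker_mulVecLin_eq_span_col [Fintype α] [Fintype β] [Fintype ι]
    {C : Matrix β α L} {B : Matrix α ι L} (hCB : C * B = 0) (hC : LinearIndependent L C.row)
    (hspan : ∀ p, p ᵥ* B = 0 → ∃ u, p = u ᵥ* C) :
    LinearMap.ker C.mulVecLin = span L (range B.col) := by
  classical
  have hle : span L (range B.col) ≤ LinearMap.ker C.mulVecLin := by
    rw [span_le]
    rintro _ ⟨j, rfl⟩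
    rw [SetLike.mem_coe, LinearMap.mem_ker, Matrix.mulVecLin_apply, ← Matrix.col_mul, hCB]
    rfl
  have hrankC : C.rank = Fintype.card β := by
    rw [Matrix.rank_eq_finrank_span_row, finrank_span_eq_card hC]
  have hker : LinearMap.ker Bᵀ.mulVecLin = LinearMap.range C.vecMulLinear := by
    ext p
    simp only [Matrix.mulVecLin_transpose, LinearMap.mem_ker, Matrix.vecMulLinear_apply,
      LinearMap.mem_range]
    refine ⟨fun hp => ?_, ?_⟩
    · obtain ⟨u, rfl⟩ := hspan p hp
      exact ⟨u, rfl⟩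
    · rintro ⟨u, rfl⟩
      rw [Matrix.vecMul_vecMul, hCB, Matrix.vecMul_zero]
  have hrangeC : finrank L (LinearMap.range C.vecMulLinear) = Fintype.card β := by
    rw [LinearMap.finrank_range_of_inj (Matrix.vecMul_injective_iff.2 hC),
      Module.finrank_fintype_fun_eq_card]
  have h₁ := C.rank_add_finrank_ker_mulVecLin
  have h₂ := Bᵀ.rank_add_finrank_ker_mulVecLin
  rw [Matrix.rank_transpose, Matrix.rank_eq_finrank_span_cols, hker, hrangeC] at h₂
  exact (Submodule.eq_of_le_of_finrank_eq hle (by omega)).symm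

theorem Matrix.finrank_image_col_union [Fintype α] (A : Matrix α ι L) (C : Matrix β α L)
    {T S : Set ι} (hT : LinearMap.ker C.mulVecLin = span L (A.col '' T)) :
    (A.col '' (T ∪ S)).finrank L
      = (A.col '' T).finrank L + ((C * A).col '' S).finrank L := by
  have hmap : ∀ R : Set ι, ((C * A).col '' R) = C.mulVecLin '' (A.col '' R) := by
    intro R
    rw [Set.image_image]
    simp only [Matrix.col_mul, Matrix.mulVecLin_apply]
  rw [Set.finrank, Set.finrank, Set.finrank,
    C.mulVecLin.finrank_eq_finrank_ker_add_finrank_map (U := span L (A.col '' (T ∪ S)))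
      (hT ▸ span_mono (image_mono subset_union_left)), hT, hmap, ← Submodule.map_span,
    image_union, span_union, Submodule.map_sup, ← hT,
    (LinearMap.le_ker_iff_map (f := C.mulVecLin)).1 le_rfl, bot_sup_eq]

end ColumnSpans

section Combinatorics

variable {r n : ℕ}

theorem StrictMono.le_iff_lt_card_filter_le {α : Type*} [LinearOrder α] {j : Fin r → α}
    (hj : StrictMono j) (c : α) (k : Fin r) :
    j k ≤ c ↔ k.val < (Finset.univ.filter fun i => j i ≤ c).card := by
  constructor
  · intro hk
    have hsub : Finset.Iic k ⊆ Finset.univ.filter fun i => j i ≤ c := fun i hi =>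
      Finset.mem_filter.2 ⟨Finset.mem_univ i, (hj.monotone (Finset.mem_Iic.1 hi)).trans hk⟩
    have := Finset.card_le_card hsub
    rw [Fin.card_Iic] at this
    omega
  · intro hk
    by_contra! hck
    have hsub : (Finset.univ.filter fun i => j i ≤ c) ⊆ Finset.Iio k := fun i hi =>
      Finset.mem_Iio.2 (hj.lt_iff_lt.1 ((Finset.mem_filter.1 hi).2.trans_lt hck))
    have := Finset.card_le_card hsub
    rw [Fin.card_Iio] at this
    omega

theorem lexLE.eq_of_le {a b : Fin r → Fin n} (ha : StrictMono a) (hb : StrictMono b)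
    (hab : lexLE a b) {c : Fin n} (hsub : ∀ k, a k ≤ c → a k ∈ range b) :
    ∀ k, (a k ≤ c ∨ b k ≤ c) → a k = b k := by
  intro k
  induction k using WellFoundedLT.induction with
  | _ k ih =>
  intro hk
  have hbelow : ∀ k' < k, a k' = b k' := fun k' hk' =>
    ih k' hk' (hk.imp (ha hk').le.trans (hb hk').le.trans)
  have hle := hab k hbelow
  have hac : a k ≤ c := hk.elim id hle.trans
  obtain ⟨k', hk'⟩ := hsub k hac
  rcases lt_or_ge k' k with hlt | hge
  · exact absurd (ha.injective ((hbelow k' hlt).trans hk')) hlt.ne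
  · exact hle.antisymm (hk' ▸ hb.monotone hge)

end Combinatorics

section RankProfile

variable {L : Type*} [Field L] {α : Type*} {r n : ℕ}

theorem Matrix.linearIndependent_col_comp {κ : Type*} [Fintype κ] {A : Matrix α (Fin n) L}
    {f : κ → Fin n} (hf : (A.submatrix id f).rank = Fintype.card κ) :
    LinearIndependent L (A.col ∘ f) := by
  rw [linearIndependent_iff_card_eq_finrank_span, ← hf, A.rank_submatrix_id_eq_finrank_image,
    Set.range_comp]

/-- Basis extension, phrased as a choice of columns. -/
theorem Matrix.exists_strictMono_rank_submatrix_eq {A : Matrix α (Fin n) L} {S : Set (Fin n)}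
    (hS : LinearIndepOn L A.col S) :
    ∃ j : Fin A.rank → Fin n,
      StrictMono j ∧ (A.submatrix id j).rank = A.rank ∧ S ⊆ range j := by
  classical
  obtain ⟨b, -, hSb, hspan, hb⟩ := exists_linearIndepOn_extension hS (subset_univ S)
  have hrank : (A.col '' b).finrank L = A.rank := by
    rw [A.rank_eq_finrank_image_univ, Set.finrank, Set.finrank,
      le_antisymm (span_mono (image_mono (subset_univ b))) (span_le.2 hspan)]
  have hcard : b.toFinset.card = A.rank := by
    rw [← hrank, Set.finrank, Set.image_eq_range, finrank_span_eq_card hb, Set.toFinset_card]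
  refine ⟨b.toFinset.orderEmbOfFin hcard, (b.toFinset.orderEmbOfFin hcard).strictMono, ?_, ?_⟩
  · rw [A.rank_submatrix_id_eq_finrank_image, Finset.range_orderEmbOfFin, coe_toFinset, hrank]
  · rw [Finset.range_orderEmbOfFin, coe_toFinset]
    exact hSb

/-- Were some column up to `c` independent of the chosen columns up to `c`, exchanging it into
the choice would produce a lexicographically smaller full-rank choice. -/
theorem Matrix.finrank_image_Iic_le_of_lexLE [Fintype α] {A : Matrix α (Fin n) L}
    {j : Fin r → Fin n} (hj : StrictMono j) (hr : A.rank = r) (hsub : (A.submatrix id j).rank = r)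
    (hlex : ∀ j', StrictMono j' → (A.submatrix id j').rank = r → lexLE j j') (c : Fin n) :
    (A.col '' Iic c).finrank L ≤ (Finset.univ.filter fun k => j k ≤ c).card := by
  subst hr
  by_contra! hlt
  set T := j '' {k | j k ≤ c}
  have hind : LinearIndepOn L A.col (range j) := (linearIndepOn_range_iff hj.injective _).2
    (Matrix.linearIndependent_col_comp (by rw [hsub, Fintype.card_fin]))
  have hT : (A.col '' T).finrank L ≤ (Finset.univ.filter fun k => j k ≤ c).card := by
    rw [Set.image_image, ← Fintype.card_subtype, Set.image_eq_range]
    exact finrank_range_le_card _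
  obtain ⟨c', hc'c, hc'⟩ : ∃ c' ≤ c, A.col c' ∉ span L (A.col '' T) := by
    by_contra! h
    have : span L (A.col '' Iic c) ≤ span L (A.col '' T) := by
      rw [span_le]
      rintro _ ⟨d, hd, rfl⟩
      exact h d hd
    exact ((Submodule.finrank_mono this).trans hT).not_gt hlt
  have hc'T : c' ∉ T := fun h => hc' (subset_span (mem_image_of_mem _ h))
  obtain ⟨j', hj', hj'rank, hj'sub⟩ := Matrix.exists_strictMono_rank_submatrix_eq
    ((linearIndepOn_insert hc'T).2 ⟨hind.mono (image_subset_range _ _), hc'⟩)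
  have hagree := (hlex j' hj' hj'rank).eq_of_le hj hj' (c := c)
    fun k hk => hj'sub (subset_insert _ _ ⟨k, hk, rfl⟩)
  obtain ⟨k, hk⟩ := hj'sub (mem_insert c' T)
  have hjk : j k = c' := (hagree k (Or.inr (hk ▸ hc'c))).trans hk
  exact hc'T ⟨k, hjk.trans_le hc'c, hjk⟩

theorem Matrix.le_of_finrank_image_Iic_le [Fintype α] {A : Matrix α (Fin n) L}
    {j : Fin r → Fin n} (hj : StrictMono j)
    (hpre : ∀ c, (A.col '' Iic c).finrank L ≤ (Finset.univ.filter fun k => j k ≤ c).card)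
    {j' : Fin r → Fin n} (hj' : StrictMono j') (hr' : (A.submatrix id j').rank = r) (i : Fin r) :
    j i ≤ j' i := by
  rw [hj.le_iff_lt_card_filter_le]
  have hi : i.val + 1 ≤ r := i.isLt
  have hind := (Matrix.linearIndependent_col_comp (by rw [hr', Fintype.card_fin])).comp _
    (Fin.castLE_injective hi)
  have hrange : range ((A.col ∘ j') ∘ Fin.castLE hi) ⊆ A.col '' Iic (j' i) := by
    rintro _ ⟨k, rfl⟩
    exact ⟨_, hj'.monotone (Fin.le_def.2 (Nat.lt_succ_iff.1 k.isLt)), rfl⟩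
  have hmono := Submodule.finrank_mono (span_mono (R := L) hrange)
  rw [finrank_span_eq_card hind, Fintype.card_fin] at hmono
  exact Nat.lt_of_succ_le (hmono.trans (hpre (j' i)))

theorem Matrix.forall_lexLE_iff_finrank_image_Iic_le [Fintype α] {A : Matrix α (Fin n) L}
    {j : Fin r → Fin n} (hj : StrictMono j)
    (hr : A.rank = r) (hsub : (A.submatrix id j).rank = r) :
    (∀ j', StrictMono j' → (A.submatrix id j').rank = r → lexLE j j') ↔
      ∀ c, (A.col '' Iic c).finrank L ≤ (Finset.univ.filter fun k => j k ≤ c).card :=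
  ⟨A.finrank_image_Iic_le_of_lexLE hj hr hsub,
    fun hpre _ hj' hr' i _ => A.le_of_finrank_image_Iic_le hj hpre hj' hr' i⟩

end RankProfile

theorem isColRankProfile_iff {α : Type*} [Fintype α] {r n : ℕ} (F : Matrix α (Fin n) K[X])
    (j : Fin r → Fin n) :
    IsColRankProfile F j ↔ StrictMono j ∧ (F.map (algebraMap K[X] (RatFunc K))).rank = r ∧
      ((F.map (algebraMap K[X] (RatFunc K))).submatrix id j).rank = r ∧
      ∀ c, ((F.map (algebraMap K[X] (RatFunc K))).col '' Iic c).finrank (RatFunc K)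
        ≤ (Finset.univ.filter fun k => j k ≤ c).card := by
  unfold IsColRankProfile
  refine and_congr_right fun hj => and_congr_right fun hr => and_congr_right fun hsub => ?_
  exact Matrix.forall_lexLE_iff_finrank_image_Iic_le
    (A := F.map (algebraMap K[X] (RatFunc K))) hj hr hsub

theorem IsKernelBasis.ker_mulVecLin_map {ℓ m : ℕ} {β : Type*} [Fintype β]
    {Kb : Matrix (Fin ℓ) (Fin m) K[X]} {F : Matrix (Fin m) β K[X]} (h : IsKernelBasis Kb F) :
    LinearMap.ker (Kb.map (algebraMap K[X] (RatFunc K))).mulVecLin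
      = span (RatFunc K) (range (F.map (algebraMap K[X] (RatFunc K))).col) := by
  set φ := algebraMap K[X] (RatFunc K)
  obtain ⟨hKbF, hind, hspan⟩ := h
  have hφ : Function.Injective φ := IsFractionRing.injective K[X] (RatFunc K)
  refine Matrix.ker_mulVecLin_eq_span_col ?_ ?_ ?_
  · rw [← Matrix.map_mul, show Kb * F = 0 from Matrix.ext fun i k => congrFun (hKbF i) k,
      Matrix.map_zero _ φ.map_zero]
  · have hmap : Function.Injective ((Algebra.linearMap K[X] (RatFunc K)).compLeft (Fin m)) :=
      hφ.comp_left
    rw [← LinearIndependent.iff_fractionRing K[X]]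
    exact hind.map' _ (LinearMap.ker_eq_bot.2 hmap)
  · intro p hp
    obtain ⟨b, hb⟩ := IsLocalization.exist_integer_multiples_of_finite (nonZeroDivisors K[X]) p
    choose q hq using hb
    have hbp : φ ∘ q = (b : K[X]) • p := funext hq
    have hqF : q ᵥ* F = 0 := by
      funext k
      apply hφ
      rw [RingHom.map_vecMul, hbp, Matrix.smul_vecMul, hp, smul_zero]
      simp
    obtain ⟨u, rfl⟩ := hspan q hqF
    have hb0 : φ b ≠ 0 := (map_ne_zero_iff φ hφ).2 (nonZeroDivisors.coe_ne_zero b)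
    refine ⟨(φ b)⁻¹ • (φ ∘ u), ?_⟩
    rw [Matrix.smul_vecMul, ← funext (RingHom.map_vecMul φ Kb u)]
    change p = (φ b)⁻¹ • (φ ∘ (u ᵥ* Kb))
    rw [hbp, ← algebraMap_smul (RatFunc K) (b : K[X]) p, smul_smul, inv_mul_cancel₀ hb0,
      one_smul]

section Concatenation

variable {n₁ n₂ r₁ r₂ : ℕ}

theorem Fin.range_append {α : Type*} (a : Fin r₁ → α) (b : Fin r₂ → α) :
    range (Fin.append a b) = range a ∪ range b := by
  ext x
  simp only [mem_range, mem_union]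
  constructor
  · rintro ⟨k, rfl⟩
    refine Fin.addCases (fun k => ?_) (fun k => ?_) k <;> simp
  · rintro (⟨k, rfl⟩ | ⟨k, rfl⟩)
    exacts [⟨Fin.castAdd r₂ k, Fin.append_left a b k⟩,
      ⟨Fin.natAdd r₁ k, Fin.append_right a b k⟩]

theorem Fin.univ_eq_range_castAdd_union_range_natAdd :
    (univ : Set (Fin (n₁ + n₂))) = range (Fin.castAdd n₂) ∪ range (Fin.natAdd n₁) := by
  ext x
  refine Fin.addCases (fun x => ?_) (fun x => ?_) x <;> simp

theorem Fin.castAdd_lt_natAdd (x : Fin n₁) (y : Fin n₂) :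
    Fin.castAdd n₂ x < Fin.natAdd n₁ y := by
  rw [Fin.lt_def, Fin.val_castAdd, Fin.val_natAdd]
  omega

theorem Fin.Iic_natAdd (c : Fin n₂) :
    Iic (Fin.natAdd n₁ c) = range (Fin.castAdd n₂) ∪ Fin.natAdd n₁ '' Iic c := by
  ext x
  refine Fin.addCases (fun x => ?_) (fun x => ?_) x
  · simp only [mem_Iic, mem_union, mem_range_self, true_or, iff_true]
    exact (Fin.castAdd_lt_natAdd x c).le
  · rw [mem_Iic, Fin.natAdd_le_natAdd_iff, mem_union, (Fin.natAdd_injective _ _).mem_set_image,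
      mem_Iic, or_iff_right]
    rintro ⟨y, hy⟩
    exact (Fin.castAdd_lt_natAdd y x).ne hy

theorem StrictMono.fin_append {a : Fin r₁ → Fin n₁} {b : Fin r₂ → Fin n₂}
    (ha : StrictMono a) (hb : StrictMono b) :
    StrictMono (Fin.append (fun k => Fin.castAdd n₂ (a k)) (fun k => Fin.natAdd n₁ (b k))) := by
  intro x y
  refine Fin.addCases (fun x => ?_) (fun x => ?_) x <;>
    refine Fin.addCases (fun y => ?_) (fun y => ?_) y <;>
    simp only [Fin.append_left, Fin.append_right]
  · simp [(Fin.strictMono_castAdd _).lt_iff_lt, ha.lt_iff_lt]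
  · exact fun _ => Fin.castAdd_lt_natAdd _ _
  · exact fun h => absurd h (Fin.castAdd_lt_natAdd _ _).not_gt
  · simp [hb.lt_iff_lt]

theorem Fin.card_filter_append_le_castAdd (a : Fin r₁ → Fin n₁) (b : Fin r₂ → Fin n₂)
    (c : Fin n₁) :
    (Finset.univ.filter fun k =>
        Fin.append (fun k => Fin.castAdd n₂ (a k)) (fun k => Fin.natAdd n₁ (b k)) k
          ≤ Fin.castAdd n₂ c).card
      = (Finset.univ.filter fun k => a k ≤ c).card := by
  rw [Finset.card_filter, Finset.card_filter, Fin.sum_univ_add]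
  simp [(Fin.strictMono_castAdd n₂).le_iff_le, (Fin.castAdd_lt_natAdd _ _).not_ge]

theorem Fin.card_filter_append_le_natAdd (a : Fin r₁ → Fin n₁) (b : Fin r₂ → Fin n₂)
    (c : Fin n₂) :
    (Finset.univ.filter fun k =>
        Fin.append (fun k => Fin.castAdd n₂ (a k)) (fun k => Fin.natAdd n₁ (b k)) k
          ≤ Fin.natAdd n₁ c).card
      = r₁ + (Finset.univ.filter fun k => b k ≤ c).card := by
  rw [Finset.card_filter, Finset.card_filter, Fin.sum_univ_add]
  simp [(Fin.castAdd_lt_natAdd _ _).le]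

theorem Matrix.finrank_image_col_castAdd_union_natAdd {L : Type*} [Field L] {α β : Type*}
    [Fintype α] (A : Matrix α (Fin (n₁ + n₂)) L) (C : Matrix β α L)
    {S₁ : Set (Fin n₁)} (S₂ : Set (Fin n₂))
    (hS₁ : LinearMap.ker C.mulVecLin = span L ((A.submatrix id (Fin.castAdd n₂)).col '' S₁)) :
    (A.col '' (Fin.castAdd n₂ '' S₁ ∪ Fin.natAdd n₁ '' S₂)).finrank L
      = ((A.submatrix id (Fin.castAdd n₂)).col '' S₁).finrank L
        + ((C * A.submatrix id (Fin.natAdd n₁)).col '' S₂).finrank L := by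
  have h := A.finrank_image_col_union C (S := Fin.natAdd n₁ '' S₂)
    (T := Fin.castAdd n₂ '' S₁) (by rw [image_image]; exact hS₁)
  rw [image_image, image_image] at h
  exact h

end Concatenation

/-- The column rank profile of `F = [F₁ | F₂]` is the concatenation of the column rank
profile of `F₁` and the (shifted) column rank profile of `F' = K₁·F₂`. -/
theorem stmt15 {K : Type*} [Field K] {m n₁ n₂ ℓ₁ r₁ r₂ : ℕ}
    (F : Matrix (Fin m) (Fin (n₁ + n₂)) K[X])
    (K₁ : Matrix (Fin ℓ₁) (Fin m) K[X])
    (hK₁ : IsKernelBasis K₁ (F.submatrix id (Fin.castAdd n₂)))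
    (j₁ : Fin r₁ → Fin n₁)
    (hj₁ : IsColRankProfile (F.submatrix id (Fin.castAdd n₂)) j₁)
    (j₂ : Fin r₂ → Fin n₂)
    (hj₂ : IsColRankProfile (K₁ * F.submatrix id (Fin.natAdd n₁)) j₂) :
    IsColRankProfile F
      (Fin.append (fun a => Fin.castAdd n₂ (j₁ a)) (fun a => Fin.natAdd n₁ (j₂ a))) := by
  have hker := hK₁.ker_mulVecLin_map
  rw [isColRankProfile_iff, ← Matrix.submatrix_map] at hj₁
  rw [isColRankProfile_iff, Matrix.map_mul, ← Matrix.submatrix_map] at hj₂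
  rw [isColRankProfile_iff, Matrix.rank_eq_finrank_image_univ,
    Matrix.rank_submatrix_id_eq_finrank_image]
  rw [← Matrix.submatrix_map, ← image_univ] at hker
  set A := F.map (algebraMap K[X] (RatFunc K))
  set C := K₁.map (algebraMap K[X] (RatFunc K))
  obtain ⟨hmono₁, hr₁, hsub₁, hpre₁⟩ := hj₁
  obtain ⟨hmono₂, hr₂, hsub₂, hpre₂⟩ := hj₂
  rw [Matrix.rank_eq_finrank_image_univ] at hr₁ hr₂
  rw [Matrix.rank_submatrix_id_eq_finrank_image] at hsub₁ hsub₂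
  have hker₁ : LinearMap.ker C.mulVecLin
      = span _ ((A.submatrix id (Fin.castAdd n₂)).col '' range j₁) := by
    rw [hker]
    exact (Submodule.eq_of_le_of_finrank_eq (span_mono (image_mono (subset_univ _)))
      (hsub₁.trans hr₁.symm)).symm
  refine ⟨hmono₁.fin_append hmono₂, ?_, ?_, fun c => ?_⟩
  · rw [Fin.univ_eq_range_castAdd_union_range_natAdd, ← image_univ, ← image_univ,
      A.finrank_image_col_castAdd_union_natAdd C _ hker, hr₁, hr₂]
  · rw [Fin.range_append, range_comp' (Fin.castAdd n₂) j₁, range_comp' (Fin.natAdd n₁) j₂,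
      A.finrank_image_col_castAdd_union_natAdd C _ hker₁, hsub₁, hsub₂]
  · refine Fin.addCases (fun c => ?_) (fun c => ?_) c
    · rw [Fin.card_filter_append_le_castAdd, ← Fin.image_castAdd_Iic, image_image]
      exact hpre₁ c
    · rw [Fin.card_filter_append_le_natAdd, Fin.Iic_natAdd, ← image_univ,
        A.finrank_image_col_castAdd_union_natAdd C _ hker, hr₁]
      exact Nat.add_le_add_left (hpre₂ c) _
end
end

section
/- Let K be a field and let F₁ ∈ K[x]^{r×n} have full row rank r and factor as F₁ = S₁·R with S₁ ∈ K[x]^{r×r} and R ∈ K[x]^{r×n}. Then deg(det(S₁)) ≤ Σ rdeg(F₁), the sum of the row degrees of F₁. -/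
open Polynomial Matrix

noncomputable section

variable {K : Type*} [Field K]

/-! Full row rank gives `r` columns of `F₁` whose `r × r` minor is nonzero. That minor is
`det S₁` times the corresponding minor of `R`, so `deg det S₁` is at most its degree, and the
Leibniz expansion bounds the degree of any `r × r` minor by the sum of the row degrees. -/

theorem Matrix.exists_det_submatrix_ne_zero_of_rank_eq {L : Type*} [Field L] {r n : ℕ}
    (A : Matrix (Fin r) (Fin n) L) (h : A.rank = r) :
    ∃ j : Fin r → Fin n, (A.submatrix id j).det ≠ 0 := by
  obtain ⟨κ, a, -, hspan, hli⟩ := exists_linearIndependent' L A.col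
  have : Finite κ := hli.finite
  have := Fintype.ofFinite κ
  have hcard : Fintype.card κ = r := by
    rw [← finrank_span_eq_card hli, hspan, ← rank_eq_finrank_span_cols, h]
  let e : Fin r ≃ κ := (Fintype.equivFinOfCardEq hcard).symm
  refine ⟨a ∘ e, ((isUnit_iff_isUnit_det _).mp ?_).ne_zero⟩
  exact linearIndependent_cols_iff_isUnit.mp (hli.comp e e.injective)

theorem exists_det_submatrix_ne_zero_of_polyRank_eq {r n : ℕ}
    (F : Matrix (Fin r) (Fin n) K[X]) (h : polyRank F = r) :
    ∃ j : Fin r → Fin n, (F.submatrix id j).det ≠ 0 := by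
  obtain ⟨j, hj⟩ := Matrix.exists_det_submatrix_ne_zero_of_rank_eq _ h
  refine ⟨j, fun h0 => hj ?_⟩
  rw [Matrix.submatrix_map, ← RingHom.mapMatrix_apply, ← RingHom.map_det, h0, map_zero]

theorem Matrix.degree_det_le_sum {R ι : Type*} [CommRing R] [Fintype ι] [DecidableEq ι]
    (M : Matrix ι ι R[X]) (d : ι → WithBot ℕ) (hd : ∀ i k, (M i k).degree ≤ d i) :
    M.det.degree ≤ ∑ i, d i := by
  rw [Matrix.det_apply]
  refine (degree_sum_le _ _).trans (Finset.sup_le fun σ _ => ?_)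
  calc (Equiv.Perm.sign σ • ∏ i, M (σ i) i).degree
      ≤ ∑ i, (M (σ i) i).degree := (degree_smul_le _ _).trans (degree_prod_le _ _)
    _ ≤ ∑ i, d (σ i) := Finset.sum_le_sum fun i _ => hd (σ i) i
    _ = ∑ i, d i := Equiv.sum_comp σ d

def natCastWithBot : WithBot ℕ →+ WithBot ℤ := (Nat.castAddMonoidHom ℤ).withBotMap

theorem natCastWithBot_mono : Monotone natCastWithBot :=
  Monotone.withBot_map Nat.mono_cast

theorem pdegZ_eq_natCastWithBot_degree (p : K[X]) :
    pdegZ p = natCastWithBot p.degree := rfl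

theorem sdeg_zero_eq_natCastWithBot_sup_degree {n : ℕ} (p : Fin n → K[X]) :
    sdeg 0 p = natCastWithBot (Finset.univ.sup fun j => (p j).degree) := by
  rw [Finset.apply_sup_eq_sup_comp_of_linearOrder _ natCastWithBot_mono rfl]
  simp [sdeg, pdegZ_eq_natCastWithBot_degree, Function.comp_def]

/-- Determinantal degree bound from a factorization of a full row rank matrix. -/
theorem stmt17 {K : Type*} [Field K] {r n : ℕ}
    (F₁ : Matrix (Fin r) (Fin n) K[X]) (hrk : polyRank F₁ = r)
    (S₁ : Matrix (Fin r) (Fin r) K[X]) (R : Matrix (Fin r) (Fin n) K[X])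
    (hfac : F₁ = S₁ * R) :
    pdegZ S₁.det ≤ ∑ i, sdeg (0 : Fin n → ℤ) (F₁ i) := by
  obtain ⟨j, hj⟩ := exists_det_submatrix_ne_zero_of_polyRank_eq F₁ hrk
  have hdet : (F₁.submatrix id j).det = S₁.det * (R.submatrix id j).det := by
    rw [hfac, ← det_mul]
    rfl
  have hdeg : S₁.det.degree ≤ ∑ i, Finset.univ.sup fun k => (F₁ i k).degree :=
    calc S₁.det.degree
        ≤ (F₁.submatrix id j).det.degree :=
          hdet ▸ degree_le_mul_left _ (right_ne_zero_of_mul (hdet ▸ hj))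
      _ ≤ _ := (F₁.submatrix id j).degree_det_le_sum _ fun i k =>
          Finset.le_sup (f := fun k => (F₁ i k).degree) (Finset.mem_univ (j k))
  simpa only [pdegZ_eq_natCastWithBot_degree, sdeg_zero_eq_natCastWithBot_sup_degree,
    map_sum] using natCastWithBot_mono hdeg

end
end
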